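/- Let h > 0 and h₊ > 0, and set h_* = (h + h₊)/2, α = 2 − h₊²/(h h_*) and β = 2 − h²/(h₊ h_*). Then α ≥ 0 and β ≥ 0 hold simultaneously if and only if 2/(√5 + 1) ≤ h₊/h ≤ (√5 + 1)/2. -/

import Mathlib

/-!
With `r = h₊ / h`, the condition `α ≥ 0` reads `r² ≤ r + 1` and `β ≥ 0` reads `r⁻² ≤ r⁻¹ + 1`.
Since `x² - x - 1 = (x - φ)(x - ψ)` with `ψ < 0`, a nonnegative `x` satisfies `x² ≤ x + 1` iff `x ≤ φ`,
so the two conditions say `r ≤ φ` and `r⁻¹ ≤ φ`, and `φ = (√5 + 1)/2`, `φ⁻¹ = 2/(√5 + 1)`.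
-/

open Real goldenRatio

theorem sq_le_add_one_iff_le_goldenRatio {x : ℝ} (hx : 0 ≤ x) : x ^ 2 ≤ x + 1 ↔ x ≤ φ := by
  have hfactor : x ^ 2 - (x + 1) = (x - φ) * (x - ψ) := by
    linear_combination (-goldenRatio_add_goldenConj) * x - goldenRatio_mul_goldenConj
  have hψ : 0 < x - ψ := by linarith [goldenConj_neg]
  rw [← sub_nonpos, hfactor, ← sub_nonpos (a := x)]
  nth_rw 1 [← zero_mul (x - ψ)]
  exact mul_le_mul_iff_left₀ hψ

theorem two_sub_sq_div_mul_half_add_nonneg_iff {a b : ℝ} (ha : 0 < a) (hb : 0 < b) :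
    0 ≤ 2 - b ^ 2 / (a * ((a + b) / 2)) ↔ b / a ≤ φ := by
  rw [← sq_le_add_one_iff_le_goldenRatio (div_nonneg hb.le ha.le), sub_nonneg,
    div_le_iff₀ (by positivity), div_pow, div_add_one ha.ne', div_le_div_iff₀ (by positivity) ha]
  rw [show 2 * (a * ((a + b) / 2)) = a * (a + b) by ring, show (b + a) * a ^ 2 = a * (a + b) * a by ring,
    mul_le_mul_iff_left₀ ha]

theorem two_div_sqrt_five_add_one : 2 / (√5 + 1) = φ⁻¹ := by
  rw [goldenRatio, inv_div, add_comm]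

theorem stmt_18 (h hp : ℝ) (hh : 0 < h) (hhp : 0 < hp) :
    (0 ≤ 2 - hp^2 / (h * ((h + hp) / 2)) ∧ 0 ≤ 2 - h^2 / (hp * ((h + hp) / 2))) ↔
    (2 / (Real.sqrt 5 + 1) ≤ hp / h ∧ hp / h ≤ (Real.sqrt 5 + 1) / 2) := by
  have hβ : 0 ≤ 2 - h ^ 2 / (hp * ((h + hp) / 2)) ↔ φ⁻¹ ≤ hp / h := by
    rw [add_comm h hp, two_sub_sq_div_mul_half_add_nonneg_iff hhp hh, ← inv_div,
      inv_le_comm₀ (div_pos hhp hh) goldenRatio_pos]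
  rw [two_sub_sq_div_mul_half_add_nonneg_iff hh hhp, hβ, two_div_sqrt_five_add_one,
    add_comm _ (1 : ℝ), and_comm]
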